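/- Let ℏ, m, g > 0. Let ψ = (ψ⁽¹⁾, ψ⁽²⁾) and φ = (φ⁽¹⁾, φ⁽²⁾) with ψ⁽¹⁾, φ⁽¹⁾ : ℝ → ℂ and ψ⁽²⁾, φ⁽²⁾ : ℝ × [0,∞) → ℂ smooth (smooth up to the boundary y = 0) and compactly supported, and suppose both satisfy the Neumann-type interior–boundary condition ∂_y ψ⁽²⁾(x,0) = (2mg/ℏ²) ψ⁽¹⁾(x) for all x ∈ ℝ. Define (Hψ)⁽¹⁾(x) = −(ℏ²/2m) ∂²ₓ ψ⁽¹⁾(x) + g ψ⁽²⁾(x,0) and (Hψ)⁽²⁾(x,y) = −(ℏ²/2m)(∂²ₓ + ∂²_y) ψ⁽²⁾(x,y), and likewise for φ. Then ∫_ℝ ψ⁽¹⁾(x)* (Hφ)⁽¹⁾(x) dx + ∫_ℝ∫_0^∞ ψ⁽²⁾(x,y)* (Hφ)⁽²⁾(x,y) dy dx = ∫_ℝ (Hψ)⁽¹⁾(x)* φ⁽¹⁾(x) dx + ∫_ℝ∫_0^∞ (Hψ)⁽²⁾(x,y)* φ⁽²⁾(x,y) dy dx. -/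

import Mathlib

open Complex

open MeasureTheory Set Function
open scoped ContDiff

noncomputable section

namespace ToyIBC

lemma infle : (1 : WithTop ℕ∞) ≤ ∞ := by exact_mod_cast le_top

lemma hasDerivAt_conj {f : ℝ → ℂ} {f' : ℂ} {x : ℝ} (h : HasDerivAt f f' x) :
    HasDerivAt (fun t => (starRingEnd ℂ) (f t)) ((starRingEnd ℂ) f') x := by
  exact h.star

lemma contDiff_conj_comp {n : WithTop ℕ∞} {f : ℝ → ℂ} (hf : ContDiff ℝ n f) :
    ContDiff ℝ n (fun s => (starRingEnd ℂ) (f s)) := by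
  have h : ContDiff ℝ n (fun z : ℂ => Complex.conjCLE z) := Complex.conjCLE.contDiff
  simpa [Complex.conjCLE_apply, Function.comp_def] using h.comp hf

lemma deriv_contDiff {f : ℝ → ℂ} (hf : ContDiff ℝ ∞ f) : ContDiff ℝ ∞ (deriv f) :=
  (contDiff_infty_iff_deriv.mp hf).2

lemma wronskian_hasDerivAt {f g : ℝ → ℂ} (hf : ContDiff ℝ ∞ f) (hg : ContDiff ℝ ∞ g) (t : ℝ) :
    HasDerivAt (fun s => (starRingEnd ℂ) (f s) * deriv g s - (starRingEnd ℂ) (deriv f s) * g s)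
      ((starRingEnd ℂ) (f t) * deriv (deriv g) t
        - (starRingEnd ℂ) (deriv (deriv f) t) * g t) t := by
  have hf1 : HasDerivAt f (deriv f t) t := (hf.differentiable (by simp) t).hasDerivAt
  have hg1 : HasDerivAt g (deriv g t) t := (hg.differentiable (by simp) t).hasDerivAt
  have hf2 : HasDerivAt (deriv f) (deriv (deriv f) t) t :=
    ((deriv_contDiff hf).differentiable (by simp) t).hasDerivAt
  have hg2 : HasDerivAt (deriv g) (deriv (deriv g) t) t :=
    ((deriv_contDiff hg).differentiable (by simp) t).hasDerivAt
  have H := ((hasDerivAt_conj hf1).mul hg2).sub ((hasDerivAt_conj hf2).mul hg1)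
  exact H.congr_deriv (by ring)

lemma wronskian_contDiff {f g : ℝ → ℂ} (hf : ContDiff ℝ ∞ f) (hg : ContDiff ℝ ∞ g) :
    ContDiff ℝ ∞
      (fun s => (starRingEnd ℂ) (f s) * deriv g s - (starRingEnd ℂ) (deriv f s) * g s) :=
  (((contDiff_conj_comp hf).mul (deriv_contDiff hg)).sub
    ((contDiff_conj_comp (deriv_contDiff hf)).mul hg))

lemma wronskian_cs {f g : ℝ → ℂ} (hfc : HasCompactSupport f) (hgc : HasCompactSupport g) :
    HasCompactSupport
      (fun s => (starRingEnd ℂ) (f s) * deriv g s - (starRingEnd ℂ) (deriv f s) * g s) := by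
  have h1 : HasCompactSupport (fun s => (starRingEnd ℂ) (f s)) :=
    hfc.comp_left (map_zero _)
  have h2 : HasCompactSupport (fun s => (starRingEnd ℂ) (f s) * deriv g s) := h1.mul_right
  have h3 : HasCompactSupport (fun s => (starRingEnd ℂ) (deriv f s) * g s) := hgc.mul_left
  have h4 : HasCompactSupport (fun s => -((starRingEnd ℂ) (deriv f s) * g s)) :=
    h3.comp_left (g := fun z : ℂ => -z) neg_zero
  exact h2.sub h3

lemma ibp_halfline {f g : ℝ → ℂ} (hf : ContDiff ℝ ∞ f) (hg : ContDiff ℝ ∞ g)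
    (hfc : HasCompactSupport f) (hgc : HasCompactSupport g) :
    ∫ y in Ioi (0:ℝ),
        ((starRingEnd ℂ) (f y) * deriv (deriv g) y
          - (starRingEnd ℂ) (deriv (deriv f) y) * g y)
      = -((starRingEnd ℂ) (f 0) * deriv g 0 - (starRingEnd ℂ) (deriv f 0) * g 0) := by
  set w : ℝ → ℂ :=
    fun s => (starRingEnd ℂ) (f s) * deriv g s - (starRingEnd ℂ) (deriv f s) * g s with hw
  have hderiv : deriv w = fun t => (starRingEnd ℂ) (f t) * deriv (deriv g) t
      - (starRingEnd ℂ) (deriv (deriv f) t) * g t :=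
    funext fun t => (wronskian_hasDerivAt hf hg t).deriv
  have key : ∫ y in Ioi (0:ℝ), deriv w y = - w 0 :=
    HasCompactSupport.integral_Ioi_deriv_eq ((wronskian_contDiff hf hg).of_le infle)
      (wronskian_cs hfc hgc) 0
  rw [hderiv] at key
  exact key

lemma ibp_line {f g : ℝ → ℂ} (hf : ContDiff ℝ ∞ f) (hg : ContDiff ℝ ∞ g)
    (hfc : HasCompactSupport f) (hgc : HasCompactSupport g) :
    ∫ x : ℝ,
        ((starRingEnd ℂ) (f x) * deriv (deriv g) x
          - (starRingEnd ℂ) (deriv (deriv f) x) * g x) = 0 := by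
  set w : ℝ → ℂ :=
    fun s => (starRingEnd ℂ) (f s) * deriv g s - (starRingEnd ℂ) (deriv f s) * g s with hw
  have hderiv : deriv w = fun t => (starRingEnd ℂ) (f t) * deriv (deriv g) t
      - (starRingEnd ℂ) (deriv (deriv f) t) * g t :=
    funext fun t => (wronskian_hasDerivAt hf hg t).deriv
  have hw1 : ContDiff ℝ 1 w := (wronskian_contDiff hf hg).of_le infle
  have hwc : HasCompactSupport w := wronskian_cs hfc hgc
  have key1 : ∫ y in Iic (0:ℝ), deriv w y = w 0 :=
    HasCompactSupport.integral_Iic_deriv_eq hw1 hwc 0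
  have key2 : ∫ y in Ioi (0:ℝ), deriv w y = - w 0 :=
    HasCompactSupport.integral_Ioi_deriv_eq hw1 hwc 0
  have hint : Integrable (deriv w) := by
    have : Continuous (deriv w) := hw1.continuous_deriv le_rfl
    exact this.integrable_of_hasCompactSupport hwc.deriv
  have htot := intervalIntegral.integral_Iic_add_Ioi (b := (0:ℝ)) (f := deriv w) (μ := volume)
    hint.integrableOn hint.integrableOn
  rw [key1, key2] at htot
  have hzero : (∫ x : ℝ, deriv w x) = 0 := by rw [← htot]; ring
  rw [← hderiv]
  exact hzero

def D1 (F : ℝ → ℝ → ℂ) : ℝ → ℝ → ℂ :=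
  fun x y => fderiv ℝ (fun p : ℝ × ℝ => F p.1 p.2) (x, y) (1, 0)

def D2 (F : ℝ → ℝ → ℂ) : ℝ → ℝ → ℂ :=
  fun x y => fderiv ℝ (fun p : ℝ × ℝ => F p.1 p.2) (x, y) (0, 1)

lemma inf_add_one_le : (∞ : WithTop ℕ∞) + 1 ≤ ∞ := le_of_eq (by rfl)

lemma contDiff_D1 {F : ℝ → ℝ → ℂ} (hF : ContDiff ℝ ∞ fun p : ℝ × ℝ => F p.1 p.2) :
    ContDiff ℝ ∞ (fun p : ℝ × ℝ => D1 F p.1 p.2) :=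
  (hF.fderiv_right inf_add_one_le).clm_apply contDiff_const

lemma contDiff_D2 {F : ℝ → ℝ → ℂ} (hF : ContDiff ℝ ∞ fun p : ℝ × ℝ => F p.1 p.2) :
    ContDiff ℝ ∞ (fun p : ℝ × ℝ => D2 F p.1 p.2) :=
  (hF.fderiv_right inf_add_one_le).clm_apply contDiff_const

lemma cs_D1 {F : ℝ → ℝ → ℂ} (hFc : HasCompactSupport fun p : ℝ × ℝ => F p.1 p.2) :
    HasCompactSupport (fun p : ℝ × ℝ => D1 F p.1 p.2) :=
  hFc.fderiv_apply ℝ (1, 0)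

lemma cs_D2 {F : ℝ → ℝ → ℂ} (hFc : HasCompactSupport fun p : ℝ × ℝ => F p.1 p.2) :
    HasCompactSupport (fun p : ℝ × ℝ => D2 F p.1 p.2) :=
  hFc.fderiv_apply ℝ (0, 1)

lemma hasDerivAt_D1 {F : ℝ → ℝ → ℂ} (hF : Differentiable ℝ fun p : ℝ × ℝ => F p.1 p.2)
    (x y : ℝ) : HasDerivAt (fun u => F u y) (D1 F x y) x := by
  have h := (hF (x, y)).hasFDerivAt.comp_hasDerivAt (x := x)
    ((hasDerivAt_id x).prodMk (hasDerivAt_const x y))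
  exact h

lemma hasDerivAt_D2 {F : ℝ → ℝ → ℂ} (hF : Differentiable ℝ fun p : ℝ × ℝ => F p.1 p.2)
    (x y : ℝ) : HasDerivAt (fun v => F x v) (D2 F x y) y := by
  have h := (hF (x, y)).hasFDerivAt.comp_hasDerivAt (x := y)
    ((hasDerivAt_const y x).prodMk (hasDerivAt_id y))
  exact h

lemma deriv_D1 {F : ℝ → ℝ → ℂ} (hF : Differentiable ℝ fun p : ℝ × ℝ => F p.1 p.2)
    (x y : ℝ) : deriv (fun u => F u y) x = D1 F x y := (hasDerivAt_D1 hF x y).deriv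

lemma deriv_D2 {F : ℝ → ℝ → ℂ} (hF : Differentiable ℝ fun p : ℝ × ℝ => F p.1 p.2)
    (x y : ℝ) : deriv (fun v => F x v) y = D2 F x y := (hasDerivAt_D2 hF x y).deriv

lemma deriv_deriv_D1 {F : ℝ → ℝ → ℂ} (hF : ContDiff ℝ ∞ fun p : ℝ × ℝ => F p.1 p.2)
    (x y : ℝ) : deriv (deriv (fun u => F u y)) x = D1 (D1 F) x y := by
  have h1 : deriv (fun u => F u y) = fun u => D1 F u y :=
    funext fun u => deriv_D1 (hF.differentiable (by simp)) u y
  rw [h1, deriv_D1 ((contDiff_D1 hF).differentiable (by simp)) x y]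

lemma deriv_deriv_D2 {F : ℝ → ℝ → ℂ} (hF : ContDiff ℝ ∞ fun p : ℝ × ℝ => F p.1 p.2)
    (x y : ℝ) : deriv (deriv (fun v => F x v)) y = D2 (D2 F) x y := by
  have h1 : deriv (fun v => F x v) = fun v => D2 F x v :=
    funext fun v => deriv_D2 (hF.differentiable (by simp)) x v
  rw [h1, deriv_D2 ((contDiff_D2 hF).differentiable (by simp)) x y]

lemma contDiff_slice1 {F : ℝ → ℝ → ℂ} (hF : ContDiff ℝ ∞ fun p : ℝ × ℝ => F p.1 p.2)
    (y : ℝ) : ContDiff ℝ ∞ (fun u => F u y) := hF.comp (contDiff_id.prodMk contDiff_const)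

lemma contDiff_slice2 {F : ℝ → ℝ → ℂ} (hF : ContDiff ℝ ∞ fun p : ℝ × ℝ => F p.1 p.2)
    (x : ℝ) : ContDiff ℝ ∞ (fun v => F x v) := hF.comp (contDiff_const.prodMk contDiff_id)

lemma cs_slice1 {F : ℝ → ℝ → ℂ} (hFc : HasCompactSupport fun p : ℝ × ℝ => F p.1 p.2)
    (y : ℝ) : HasCompactSupport (fun u => F u y) := by
  apply HasCompactSupport.intro (hFc.image continuous_fst)
  intro u hu
  by_contra h
  exact hu ⟨(u, y), subset_tsupport _ h, rfl⟩

lemma cs_slice2 {F : ℝ → ℝ → ℂ} (hFc : HasCompactSupport fun p : ℝ × ℝ => F p.1 p.2)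
    (x : ℝ) : HasCompactSupport (fun v => F x v) := by
  apply HasCompactSupport.intro (hFc.image continuous_snd)
  intro v hv
  by_contra h
  exact hv ⟨(x, v), subset_tsupport _ h, rfl⟩

lemma integrable_prod_cs {F : ℝ × ℝ → ℂ} (hc : Continuous F) (hs : HasCompactSupport F) :
    Integrable F ((volume : Measure ℝ).prod ((volume : Measure ℝ).restrict (Ioi 0))) := by
  have h : Integrable F (volume : Measure (ℝ × ℝ)) := hc.integrable_of_hasCompactSupport hs
  have e : (volume : Measure ℝ).prod ((volume : Measure ℝ).restrict (Ioi (0:ℝ)))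
      = (volume : Measure (ℝ × ℝ)).restrict (univ ×ˢ Ioi (0:ℝ)) := by
    calc (volume : Measure ℝ).prod ((volume : Measure ℝ).restrict (Ioi (0:ℝ)))
        = ((volume : Measure ℝ).restrict univ).prod ((volume : Measure ℝ).restrict (Ioi (0:ℝ))) := by
          rw [Measure.restrict_univ]
      _ = ((volume : Measure ℝ).prod (volume : Measure ℝ)).restrict (univ ×ˢ Ioi (0:ℝ)) :=
          Measure.prod_restrict _ _
      _ = (volume : Measure (ℝ × ℝ)).restrict (univ ×ˢ Ioi (0:ℝ)) := rfl
  rw [e]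
  exact h.restrict

end ToyIBC

open ToyIBC

/-- **Symmetry of the toy IBC Hamiltonian (Neumann-type IBC).**
On wave functions `ψ = (ψ¹, ψ²)` on `ℝ ⊔ (ℝ × [0,∞))` that are smooth (up to the
boundary `y = 0`, formalized by smoothness on all of `ℝ²`), compactly supported,
and satisfy the Neumann-type interior–boundary condition `∂_y ψ²(x,0) = (2mg/ℏ²) ψ¹(x)`,
the operator `(Hψ)¹(x) = −(ℏ²/2m) ∂²ₓ ψ¹(x) + g ψ²(x,0)`,
`(Hψ)²(x,y) = −(ℏ²/2m)(∂²ₓ + ∂²_y) ψ²(x,y)` is symmetric with respect to the inner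
product of `L²(ℝ) ⊕ L²(ℝ × [0,∞))`. -/
theorem toy_IBC_hamiltonian_symmetric_neumann
    (ℏ m g : ℝ) (hℏ : 0 < ℏ) (hm : 0 < m) (hg : 0 < g)
    (ψ1 φ1 : ℝ → ℂ) (ψ2 φ2 : ℝ → ℝ → ℂ)
    (hψ1 : ContDiff ℝ (⊤ : ℕ∞) ψ1) (hφ1 : ContDiff ℝ (⊤ : ℕ∞) φ1)
    (hψ2 : ContDiff ℝ (⊤ : ℕ∞) (fun p : ℝ × ℝ => ψ2 p.1 p.2))
    (hφ2 : ContDiff ℝ (⊤ : ℕ∞) (fun p : ℝ × ℝ => φ2 p.1 p.2))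
    (hψ1c : HasCompactSupport ψ1) (hφ1c : HasCompactSupport φ1)
    (hψ2c : HasCompactSupport (fun p : ℝ × ℝ => ψ2 p.1 p.2))
    (hφ2c : HasCompactSupport (fun p : ℝ × ℝ => φ2 p.1 p.2))
    -- Neumann-type interior–boundary condition for ψ and for φ
    (hIBCψ : ∀ x : ℝ, deriv (fun v => ψ2 x v) 0 = (2 * m * g / ℏ ^ 2 : ℝ) * ψ1 x)
    (hIBCφ : ∀ x : ℝ, deriv (fun v => φ2 x v) 0 = (2 * m * g / ℏ ^ 2 : ℝ) * φ1 x) :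
    -- ⟨ψ, Hφ⟩ = ⟨Hψ, φ⟩
    ((∫ x : ℝ, (starRingEnd ℂ) (ψ1 x) *
        (-((ℏ : ℂ) ^ 2 / (2 * (m : ℂ))) * deriv (deriv φ1) x
          + (g : ℂ) * φ2 x 0))
      + ∫ x : ℝ, ∫ y in Set.Ioi (0 : ℝ), (starRingEnd ℂ) (ψ2 x y) *
          (-((ℏ : ℂ) ^ 2 / (2 * (m : ℂ)))
            * (deriv (deriv (fun u => φ2 u y)) x + deriv (deriv (fun v => φ2 x v)) y)))
    = ((∫ x : ℝ, (starRingEnd ℂ)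
          (-((ℏ : ℂ) ^ 2 / (2 * (m : ℂ))) * deriv (deriv ψ1) x
            + (g : ℂ) * ψ2 x 0) * φ1 x)
      + ∫ x : ℝ, ∫ y in Set.Ioi (0 : ℝ), (starRingEnd ℂ)
          (-((ℏ : ℂ) ^ 2 / (2 * (m : ℂ)))
            * (deriv (deriv (fun u => ψ2 u y)) x + deriv (deriv (fun v => ψ2 x v)) y))
          * φ2 x y) := by
  have hψ1' : ContDiff ℝ ∞ ψ1 := hψ1.of_le (by simp)
  have hφ1' : ContDiff ℝ ∞ φ1 := hφ1.of_le (by simp)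
  have hψ2' : ContDiff ℝ ∞ (fun p : ℝ × ℝ => ψ2 p.1 p.2) := hψ2.of_le (by simp)
  have hφ2' : ContDiff ℝ ∞ (fun p : ℝ × ℝ => φ2 p.1 p.2) := hφ2.of_le (by simp)
  have ddxφ : ∀ x y : ℝ, deriv (deriv (fun u => φ2 u y)) x = D1 (D1 φ2) x y :=
    fun x y => deriv_deriv_D1 hφ2' x y
  have ddyφ : ∀ x y : ℝ, deriv (deriv (fun v => φ2 x v)) y = D2 (D2 φ2) x y :=
    fun x y => deriv_deriv_D2 hφ2' x y
  have ddxψ : ∀ x y : ℝ, deriv (deriv (fun u => ψ2 u y)) x = D1 (D1 ψ2) x y :=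
    fun x y => deriv_deriv_D1 hψ2' x y
  have ddyψ : ∀ x y : ℝ, deriv (deriv (fun v => ψ2 x v)) y = D2 (D2 ψ2) x y :=
    fun x y => deriv_deriv_D2 hψ2' x y
  simp only [ddxφ, ddyφ, ddxψ, ddyψ]
  set c : ℂ := -((ℏ : ℂ) ^ 2 / (2 * (m : ℂ))) with hc
  set gc : ℂ := (g : ℂ) with hgc
  set P : Measure (ℝ × ℝ) :=
    (volume : Measure ℝ).prod ((volume : Measure ℝ).restrict (Ioi 0)) with hP
  -- continuity facts
  have hcψ1 : Continuous ψ1 := hψ1'.continuous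
  have hcφ1 : Continuous φ1 := hφ1'.continuous
  have hcψ20 : Continuous (fun x => ψ2 x 0) := (contDiff_slice1 hψ2' 0).continuous
  have hcφ20 : Continuous (fun x => φ2 x 0) := (contDiff_slice1 hφ2' 0).continuous
  have hcddψ1 : Continuous (deriv (deriv ψ1)) :=
    (deriv_contDiff (deriv_contDiff hψ1')).continuous
  have hcddφ1 : Continuous (deriv (deriv φ1)) :=
    (deriv_contDiff (deriv_contDiff hφ1')).continuous
  have hcΨ : Continuous (fun p : ℝ × ℝ => ψ2 p.1 p.2) := hψ2'.continuous
  have hcΦ : Continuous (fun p : ℝ × ℝ => φ2 p.1 p.2) := hφ2'.continuous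
  have hcD1Dφ : Continuous (fun p : ℝ × ℝ => D1 (D1 φ2) p.1 p.2) :=
    (contDiff_D1 (contDiff_D1 hφ2')).continuous
  have hcD2Dφ : Continuous (fun p : ℝ × ℝ => D2 (D2 φ2) p.1 p.2) :=
    (contDiff_D2 (contDiff_D2 hφ2')).continuous
  have hcD1Dψ : Continuous (fun p : ℝ × ℝ => D1 (D1 ψ2) p.1 p.2) :=
    (contDiff_D1 (contDiff_D1 hψ2')).continuous
  have hcD2Dψ : Continuous (fun p : ℝ × ℝ => D2 (D2 ψ2) p.1 p.2) :=
    (contDiff_D2 (contDiff_D2 hψ2')).continuous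
  -- integrability helpers
  have int1 : ∀ (F G : ℝ → ℂ), Continuous F → Continuous G → HasCompactSupport F →
      Integrable (fun x => (starRingEnd ℂ) (F x) * G x) := fun F G hF hG hFc =>
    ((Complex.continuous_conj.comp hF).mul hG).integrable_of_hasCompactSupport
      ((hFc.comp_left (map_zero _)).mul_right)
  have int1' : ∀ (F G : ℝ → ℂ), Continuous F → Continuous G → HasCompactSupport G →
      Integrable (fun x => (starRingEnd ℂ) (F x) * G x) := fun F G hF hG hGc =>
    ((Complex.continuous_conj.comp hF).mul hG).integrable_of_hasCompactSupport hGc.mul_left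
  have int2 : ∀ (F G : ℝ × ℝ → ℂ), Continuous F → Continuous G → HasCompactSupport F →
      Integrable (fun p : ℝ × ℝ => (starRingEnd ℂ) (F p) * G p) P := fun F G hF hG hFc =>
    integrable_prod_cs ((Complex.continuous_conj.comp hF).mul hG)
      ((hFc.comp_left (map_zero _)).mul_right)
  have int2' : ∀ (F G : ℝ × ℝ → ℂ), Continuous F → Continuous G → HasCompactSupport G →
      Integrable (fun p : ℝ × ℝ => (starRingEnd ℂ) (F p) * G p) P := fun F G hF hG hGc =>
    integrable_prod_cs ((Complex.continuous_conj.comp hF).mul hG) hGc.mul_left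
  -- conjugation of the real constants
  have hconjc : (starRingEnd ℂ) c = c := by
    rw [hc]; simp [map_neg, map_div₀, map_mul, map_pow, Complex.conj_ofReal, map_ofNat]
  have hconjg : (starRingEnd ℂ) gc = gc := by rw [hgc]; simp [Complex.conj_ofReal]
  -- decomposition of the four integrals
  have e1 : (∫ x : ℝ, (starRingEnd ℂ) (ψ1 x) * (c * deriv (deriv φ1) x + gc * φ2 x 0))
      = c * (∫ x : ℝ, (starRingEnd ℂ) (ψ1 x) * deriv (deriv φ1) x)
        + gc * (∫ x : ℝ, (starRingEnd ℂ) (ψ1 x) * φ2 x 0) := by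
    have hfun : (fun x : ℝ => (starRingEnd ℂ) (ψ1 x) * (c * deriv (deriv φ1) x + gc * φ2 x 0))
        = fun x : ℝ => c * ((starRingEnd ℂ) (ψ1 x) * deriv (deriv φ1) x)
          + gc * ((starRingEnd ℂ) (ψ1 x) * φ2 x 0) := funext fun x => by ring
    rw [hfun, integral_add ((int1 _ _ hcψ1 hcddφ1 hψ1c).const_mul c)
      ((int1 _ _ hcψ1 hcφ20 hψ1c).const_mul gc), integral_const_mul, integral_const_mul]
  have e3 : (∫ x : ℝ, (starRingEnd ℂ) (c * deriv (deriv ψ1) x + gc * ψ2 x 0) * φ1 x)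
      = c * (∫ x : ℝ, (starRingEnd ℂ) (deriv (deriv ψ1) x) * φ1 x)
        + gc * (∫ x : ℝ, (starRingEnd ℂ) (ψ2 x 0) * φ1 x) := by
    have hfun : (fun x : ℝ => (starRingEnd ℂ) (c * deriv (deriv ψ1) x + gc * ψ2 x 0) * φ1 x)
        = fun x : ℝ => c * ((starRingEnd ℂ) (deriv (deriv ψ1) x) * φ1 x)
          + gc * ((starRingEnd ℂ) (ψ2 x 0) * φ1 x) := funext fun x => by
      simp only [map_add, map_mul, hconjc, hconjg]; ring
    rw [hfun, integral_add ((int1' _ _ hcddψ1 hcφ1 hφ1c).const_mul c)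
      ((int1' _ _ hcψ20 hcφ1 hφ1c).const_mul gc), integral_const_mul, integral_const_mul]
  have e2 : (∫ x : ℝ, ∫ y in Ioi (0:ℝ), (starRingEnd ℂ) (ψ2 x y)
        * (c * (D1 (D1 φ2) x y + D2 (D2 φ2) x y)))
      = c * (∫ p : ℝ × ℝ, (starRingEnd ℂ) (ψ2 p.1 p.2) * D1 (D1 φ2) p.1 p.2 ∂P)
        + c * (∫ p : ℝ × ℝ, (starRingEnd ℂ) (ψ2 p.1 p.2) * D2 (D2 φ2) p.1 p.2 ∂P) := by
    have hIL : Integrable (fun p : ℝ × ℝ => (starRingEnd ℂ) (ψ2 p.1 p.2)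
        * (c * (D1 (D1 φ2) p.1 p.2 + D2 (D2 φ2) p.1 p.2))) P :=
      int2 _ _ hcΨ (continuous_const.mul (hcD1Dφ.add hcD2Dφ)) hψ2c
    have h0 : (∫ x : ℝ, ∫ y in Ioi (0:ℝ), (starRingEnd ℂ) (ψ2 x y)
        * (c * (D1 (D1 φ2) x y + D2 (D2 φ2) x y)))
        = ∫ p : ℝ × ℝ, (starRingEnd ℂ) (ψ2 p.1 p.2)
            * (c * (D1 (D1 φ2) p.1 p.2 + D2 (D2 φ2) p.1 p.2)) ∂P :=
      MeasureTheory.integral_integral (f := fun x y => (starRingEnd ℂ) (ψ2 x y)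
        * (c * (D1 (D1 φ2) x y + D2 (D2 φ2) x y))) hIL
    have hfun : (fun p : ℝ × ℝ => (starRingEnd ℂ) (ψ2 p.1 p.2)
        * (c * (D1 (D1 φ2) p.1 p.2 + D2 (D2 φ2) p.1 p.2)))
        = fun p : ℝ × ℝ => c * ((starRingEnd ℂ) (ψ2 p.1 p.2) * D1 (D1 φ2) p.1 p.2)
          + c * ((starRingEnd ℂ) (ψ2 p.1 p.2) * D2 (D2 φ2) p.1 p.2) := funext fun p => by ring
    rw [h0, hfun, integral_add ((int2 _ _ hcΨ hcD1Dφ hψ2c).const_mul c)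
      ((int2 _ _ hcΨ hcD2Dφ hψ2c).const_mul c), integral_const_mul, integral_const_mul]
  have e4 : (∫ x : ℝ, ∫ y in Ioi (0:ℝ), (starRingEnd ℂ)
        (c * (D1 (D1 ψ2) x y + D2 (D2 ψ2) x y)) * φ2 x y)
      = c * (∫ p : ℝ × ℝ, (starRingEnd ℂ) (D1 (D1 ψ2) p.1 p.2) * φ2 p.1 p.2 ∂P)
        + c * (∫ p : ℝ × ℝ, (starRingEnd ℂ) (D2 (D2 ψ2) p.1 p.2) * φ2 p.1 p.2 ∂P) := by
    have hIL : Integrable (fun p : ℝ × ℝ => (starRingEnd ℂ)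
        (c * (D1 (D1 ψ2) p.1 p.2 + D2 (D2 ψ2) p.1 p.2)) * φ2 p.1 p.2) P :=
      int2' _ _ (continuous_const.mul (hcD1Dψ.add hcD2Dψ)) hcΦ hφ2c
    have h0 : (∫ x : ℝ, ∫ y in Ioi (0:ℝ), (starRingEnd ℂ)
        (c * (D1 (D1 ψ2) x y + D2 (D2 ψ2) x y)) * φ2 x y)
        = ∫ p : ℝ × ℝ, (starRingEnd ℂ)
            (c * (D1 (D1 ψ2) p.1 p.2 + D2 (D2 ψ2) p.1 p.2)) * φ2 p.1 p.2 ∂P :=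
      MeasureTheory.integral_integral (f := fun x y => (starRingEnd ℂ)
        (c * (D1 (D1 ψ2) x y + D2 (D2 ψ2) x y)) * φ2 x y) hIL
    have hfun : (fun p : ℝ × ℝ => (starRingEnd ℂ)
        (c * (D1 (D1 ψ2) p.1 p.2 + D2 (D2 ψ2) p.1 p.2)) * φ2 p.1 p.2)
        = fun p : ℝ × ℝ => c * ((starRingEnd ℂ) (D1 (D1 ψ2) p.1 p.2) * φ2 p.1 p.2)
          + c * ((starRingEnd ℂ) (D2 (D2 ψ2) p.1 p.2) * φ2 p.1 p.2) := funext fun p => by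
      simp only [map_add, map_mul, hconjc]; ring
    rw [h0, hfun, integral_add ((int2' _ _ hcD1Dψ hcΦ hφ2c).const_mul c)
      ((int2' _ _ hcD2Dψ hcΦ hφ2c).const_mul c), integral_const_mul, integral_const_mul]
  -- the three integration-by-parts identities
  have ha : (∫ x : ℝ, (starRingEnd ℂ) (ψ1 x) * deriv (deriv φ1) x)
      = ∫ x : ℝ, (starRingEnd ℂ) (deriv (deriv ψ1) x) * φ1 x := by
    have h := ibp_line hψ1' hφ1' hψ1c hφ1c
    rw [integral_sub (int1 _ _ hcψ1 hcddφ1 hψ1c) (int1' _ _ hcddψ1 hcφ1 hφ1c)] at h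
    exact sub_eq_zero.mp h
  have hIX1 : Integrable (fun p : ℝ × ℝ =>
      (starRingEnd ℂ) (ψ2 p.1 p.2) * D1 (D1 φ2) p.1 p.2) P := int2 _ _ hcΨ hcD1Dφ hψ2c
  have hIX2 : Integrable (fun p : ℝ × ℝ =>
      (starRingEnd ℂ) (D1 (D1 ψ2) p.1 p.2) * φ2 p.1 p.2) P := int2' _ _ hcD1Dψ hcΦ hφ2c
  have hIY1 : Integrable (fun p : ℝ × ℝ =>
      (starRingEnd ℂ) (ψ2 p.1 p.2) * D2 (D2 φ2) p.1 p.2) P := int2 _ _ hcΨ hcD2Dφ hψ2c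
  have hIY2 : Integrable (fun p : ℝ × ℝ =>
      (starRingEnd ℂ) (D2 (D2 ψ2) p.1 p.2) * φ2 p.1 p.2) P := int2' _ _ hcD2Dψ hcΦ hφ2c
  have hX : (∫ p : ℝ × ℝ, (starRingEnd ℂ) (ψ2 p.1 p.2) * D1 (D1 φ2) p.1 p.2 ∂P)
      = ∫ p : ℝ × ℝ, (starRingEnd ℂ) (D1 (D1 ψ2) p.1 p.2) * φ2 p.1 p.2 ∂P := by
    have hinner : ∀ y : ℝ, (∫ x : ℝ, ((starRingEnd ℂ) (ψ2 x y) * D1 (D1 φ2) x y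
        - (starRingEnd ℂ) (D1 (D1 ψ2) x y) * φ2 x y)) = 0 := by
      intro y
      have h := ibp_line (contDiff_slice1 hψ2' y) (contDiff_slice1 hφ2' y)
        (cs_slice1 hψ2c y) (cs_slice1 hφ2c y)
      simp only [ddxφ, ddxψ] at h
      exact h
    have hsub : (∫ p : ℝ × ℝ, ((starRingEnd ℂ) (ψ2 p.1 p.2) * D1 (D1 φ2) p.1 p.2
        - (starRingEnd ℂ) (D1 (D1 ψ2) p.1 p.2) * φ2 p.1 p.2) ∂P) = 0 := by
      have hswap := MeasureTheory.integral_integral_swap (f := fun x y =>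
        (starRingEnd ℂ) (ψ2 x y) * D1 (D1 φ2) x y
          - (starRingEnd ℂ) (D1 (D1 ψ2) x y) * φ2 x y) (hIX1.sub hIX2)
      have h0 : (∫ x : ℝ, ∫ y in Ioi (0:ℝ), ((starRingEnd ℂ) (ψ2 x y) * D1 (D1 φ2) x y
          - (starRingEnd ℂ) (D1 (D1 ψ2) x y) * φ2 x y))
          = ∫ p : ℝ × ℝ, ((starRingEnd ℂ) (ψ2 p.1 p.2) * D1 (D1 φ2) p.1 p.2
            - (starRingEnd ℂ) (D1 (D1 ψ2) p.1 p.2) * φ2 p.1 p.2) ∂P :=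
        MeasureTheory.integral_integral (f := fun x y =>
          (starRingEnd ℂ) (ψ2 x y) * D1 (D1 φ2) x y
            - (starRingEnd ℂ) (D1 (D1 ψ2) x y) * φ2 x y) (hIX1.sub hIX2)
      rw [← h0, hswap]
      simp only [hinner, integral_zero]
    rw [integral_sub hIX1 hIX2] at hsub
    exact sub_eq_zero.mp hsub
  have hY : (∫ p : ℝ × ℝ, (starRingEnd ℂ) (ψ2 p.1 p.2) * D2 (D2 φ2) p.1 p.2 ∂P)
        - (∫ p : ℝ × ℝ, (starRingEnd ℂ) (D2 (D2 ψ2) p.1 p.2) * φ2 p.1 p.2 ∂P)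
      = ((2 * m * g / ℏ ^ 2 : ℝ) : ℂ) * (∫ x : ℝ, (starRingEnd ℂ) (ψ1 x) * φ2 x 0)
        - ((2 * m * g / ℏ ^ 2 : ℝ) : ℂ) * (∫ x : ℝ, (starRingEnd ℂ) (ψ2 x 0) * φ1 x) := by
    have hinner : ∀ x : ℝ, (∫ y in Ioi (0:ℝ), ((starRingEnd ℂ) (ψ2 x y) * D2 (D2 φ2) x y
        - (starRingEnd ℂ) (D2 (D2 ψ2) x y) * φ2 x y))
        = ((2 * m * g / ℏ ^ 2 : ℝ) : ℂ) * ((starRingEnd ℂ) (ψ1 x) * φ2 x 0)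
          - ((2 * m * g / ℏ ^ 2 : ℝ) : ℂ) * ((starRingEnd ℂ) (ψ2 x 0) * φ1 x) := by
      intro x
      have h := ibp_halfline (contDiff_slice2 hψ2' x) (contDiff_slice2 hφ2' x)
        (cs_slice2 hψ2c x) (cs_slice2 hφ2c x)
      simp only [ddyφ, ddyψ] at h
      rw [hIBCφ x, hIBCψ x] at h
      rw [h]
      simp only [map_mul, Complex.conj_ofReal]
      ring
    have h0 : (∫ x : ℝ, ∫ y in Ioi (0:ℝ), ((starRingEnd ℂ) (ψ2 x y) * D2 (D2 φ2) x y
        - (starRingEnd ℂ) (D2 (D2 ψ2) x y) * φ2 x y))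
        = ∫ p : ℝ × ℝ, ((starRingEnd ℂ) (ψ2 p.1 p.2) * D2 (D2 φ2) p.1 p.2
          - (starRingEnd ℂ) (D2 (D2 ψ2) p.1 p.2) * φ2 p.1 p.2) ∂P :=
      MeasureTheory.integral_integral (f := fun x y =>
        (starRingEnd ℂ) (ψ2 x y) * D2 (D2 φ2) x y
          - (starRingEnd ℂ) (D2 (D2 ψ2) x y) * φ2 x y) (hIY1.sub hIY2)
    rw [← integral_sub hIY1 hIY2, ← h0]
    have h1 : (∫ x : ℝ, ∫ y in Ioi (0:ℝ), ((starRingEnd ℂ) (ψ2 x y) * D2 (D2 φ2) x y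
        - (starRingEnd ℂ) (D2 (D2 ψ2) x y) * φ2 x y))
        = ∫ x : ℝ, (((2 * m * g / ℏ ^ 2 : ℝ) : ℂ) * ((starRingEnd ℂ) (ψ1 x) * φ2 x 0)
          - ((2 * m * g / ℏ ^ 2 : ℝ) : ℂ) * ((starRingEnd ℂ) (ψ2 x 0) * φ1 x)) := by
      simp only [hinner]
    rw [h1, integral_sub ((int1 _ _ hcψ1 hcφ20 hψ1c).const_mul _)
      ((int1' _ _ hcψ20 hcφ1 hφ1c).const_mul _), integral_const_mul, integral_const_mul]
  have hck : c * ((2 * m * g / ℏ ^ 2 : ℝ) : ℂ) = -gc := by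
    rw [hc, hgc]
    have h1 : (ℏ : ℂ) ≠ 0 := Complex.ofReal_ne_zero.mpr hℏ.ne'
    have h2 : (m : ℂ) ≠ 0 := Complex.ofReal_ne_zero.mpr hm.ne'
    push_cast
    field_simp
  rw [e1, e2, e3, e4]
  linear_combination c * ha + c * hX + c * hY
    + ((∫ x : ℝ, (starRingEnd ℂ) (ψ1 x) * φ2 x 0)
      - (∫ x : ℝ, (starRingEnd ℂ) (ψ2 x 0) * φ1 x)) * hck
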